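/- Suppose after model clipping every certificate Φ in the surviving set newCert satisfies all local conditions φˡ ∧ fˡ(x) → φ^{l+1} for the clipped network, and each Φ's output constraint φᵏ implies its property ξ. Then the clipped network satisfies ξ for all inputs satisfying φ⁰, for every surviving certificate (soundness of model clipping). -/
import Mathlib


/-- Running a layered network `f` for `l` layers from the input. -/
def netRun (n : ℕ → ℕ) (f : ∀ l, (Fin (n l) → ℝ) → (Fin (n (l+1)) → ℝ)) :
    ∀ l, (Fin (n 0) → ℝ) → (Fin (n l) → ℝ)
  | 0 => fun x => x
  | l + 1 => fun x => f l (netRun n f l x)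

/-- Soundness of model clipping: every certificate surviving the clipping
(indexed by `ι`) satisfies all local conditions on the clipped network and its
output constraint implies its property, hence the clipped network satisfies
the property on all inputs satisfying the precondition. -/
theorem model_clipping_sound
    (n : ℕ → ℕ) (k : ℕ)
    (f : ∀ l, (Fin (n l) → ℝ) → (Fin (n (l+1)) → ℝ))  -- the clipped network
    (ι : Type)                                          -- surviving certificates
    (φ : ι → ∀ l, (Fin (n l) → ℝ) → Prop)
    (ξ : ι → (Fin (n k) → ℝ) → Prop)
    (hstep : ∀ i, ∀ l, l < k → ∀ x : Fin (n l) → ℝ, φ i l x → φ i (l+1) (f l x))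
    (hpost : ∀ i, ∀ y : Fin (n k) → ℝ, φ i k y → ξ i y) :
    ∀ i, ∀ x0 : Fin (n 0) → ℝ, φ i 0 x0 → ξ i (netRun n f k x0) := by
  intro i x0 h0
  have key : ∀ l, l ≤ k → φ i l (netRun n f l x0) := by
    intro l
    induction l with
    | zero => intro _; exact h0
    | succ m ih =>
      intro hle
      exact hstep i m (Nat.lt_of_succ_le hle) _ (ih (Nat.le_of_succ_le hle))
  exact hpost i _ (key k le_rfl)
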